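/- (One-step contraction from the proof of Theorem 1) Let Assumptions 1 and 2 hold, let B̄(k) be symmetric, and let x(k) ∈ [0,1]ⁿ. Then the next state x(k+1) = x(k) + h((I − X(k))B̄(k) − D(k))x(k) satisfies ‖x(k+1)‖ ≤ ρ(M(k))·‖x(k)‖, where ‖·‖ is the Euclidean norm and ρ the spectral radius. -/

import Mathlib

/-!
Both the SIS update and `M x` equal `(1 - hδᵢ) xᵢ + h (B̄ x)ᵢ` up to the factor `1 - xᵢ` on the
infection term. For `x ∈ [0,1]ⁿ`, nonnegativity makes this squeeze `0 ≤ x(k+1) ≤ M x` entrywise,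
so `‖x(k+1)‖ ≤ ‖M x‖`. As `M` is real symmetric, its complexification is self-adjoint, and in a
C⋆-algebra the norm of a self-adjoint element equals its spectral radius, whence `‖M x‖ ≤ ρ(M) ‖x‖`.
-/

open Matrix

/-- Spectral radius of a real matrix: largest modulus of its complex eigenvalues. -/
noncomputable def specRad {n : ℕ} (M : Matrix (Fin n) (Fin n) ℝ) : ℝ :=
  sSup {r : ℝ | ∃ μ ∈ spectrum ℂ (M.map Complex.ofReal), r = ‖μ‖}

/-- Euclidean norm on `ℝⁿ`. -/
noncomputable def euclNorm {n : ℕ} (x : Fin n → ℝ) : ℝ := Real.sqrt (∑ i, (x i) ^ 2)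

section SpectralBound

variable {n : ℕ}

theorem euclNorm_le_euclNorm {x y : Fin n → ℝ} (hx : ∀ i, 0 ≤ x i) (hxy : ∀ i, x i ≤ y i) :
    euclNorm x ≤ euclNorm y :=
  Real.sqrt_le_sqrt <| Finset.sum_le_sum fun i _ => pow_le_pow_left₀ (hx i) (hxy i) 2

theorem euclNorm_eq_norm_ofReal (x : Fin n → ℝ) :
    euclNorm x = ‖WithLp.toLp 2 (Complex.ofRealHom ∘ x)‖ := by
  simp [euclNorm, EuclideanSpace.norm_eq]

theorem specRad_nonneg (M : Matrix (Fin n) (Fin n) ℝ) : 0 ≤ specRad M :=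
  Real.sSup_nonneg fun _ ⟨μ, _, hr⟩ => hr ▸ norm_nonneg μ

theorem norm_le_specRad_of_mem_spectrum {M : Matrix (Fin n) (Fin n) ℝ} {μ : ℂ}
    (hμ : μ ∈ spectrum ℂ (M.map Complex.ofReal)) : ‖μ‖ ≤ specRad M := by
  refine le_csSup ?_ ⟨μ, hμ, rfl⟩
  obtain ⟨C, hC⟩ := ((finite_spectrum (M.map Complex.ofReal)).image (‖·‖)).bddAbove
  exact ⟨C, by rintro _ ⟨ν, hν, rfl⟩; exact hC ⟨ν, hν, rfl⟩⟩

open scoped Matrix.Norms.L2Operator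

theorem Matrix.IsSymm.l2_opNorm_map_ofReal_le_specRad {M : Matrix (Fin n) (Fin n) ℝ}
    (hM : M.IsSymm) : ‖M.map Complex.ofReal‖ ≤ specRad M := by
  have hsa : IsSelfAdjoint (M.map Complex.ofReal) := by
    ext i j
    simp [hM.apply i j]
  have hrad_le : spectralRadius ℂ (M.map Complex.ofReal) ≤ ENNReal.ofReal (specRad M) :=
    iSup₂_le fun μ hμ => by
      rw [← ENNReal.ofReal_coe_nnreal, coe_nnnorm]
      exact ENNReal.ofReal_le_ofReal (norm_le_specRad_of_mem_spectrum hμ)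
  rw [← hsa.toReal_spectralRadius_complex_eq_norm]
  exact ENNReal.toReal_le_of_le_ofReal (specRad_nonneg M) hrad_le

theorem Matrix.IsSymm.euclNorm_mulVec_le {M : Matrix (Fin n) (Fin n) ℝ} (hM : M.IsSymm)
    (x : Fin n → ℝ) : euclNorm (M *ᵥ x) ≤ specRad M * euclNorm x := by
  have hmap : Complex.ofRealHom ∘ (M *ᵥ x) = M.map Complex.ofRealHom *ᵥ (Complex.ofRealHom ∘ x) :=
    funext (Complex.ofRealHom.map_mulVec M x)
  rw [euclNorm_eq_norm_ofReal, euclNorm_eq_norm_ofReal, hmap]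
  calc _ ≤ ‖M.map Complex.ofReal‖ * ‖WithLp.toLp 2 (Complex.ofRealHom ∘ x)‖ :=
        l2_opNorm_mulVec _ _
    _ ≤ _ := by gcongr; exact hM.l2_opNorm_map_ofReal_le_specRad

end SpectralBound

section SISStep

variable {ι : Type*} [Fintype ι]

theorem mulVec_apply_nonneg {B : Matrix ι ι ℝ} {x : ι → ℝ} (hB : ∀ i j, 0 ≤ B i j)
    (hx : ∀ i, 0 ≤ x i) (i : ι) : 0 ≤ (B *ᵥ x) i :=
  Finset.sum_nonneg fun j _ => mul_nonneg (hB i j) (hx j)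

variable [DecidableEq ι]

noncomputable def sisStep (h : ℝ) (δ : ι → ℝ) (B : Matrix ι ι ℝ) (x : ι → ℝ) : ι → ℝ :=
  x + h • (((1 - diagonal x) * B - diagonal δ) *ᵥ x)

variable {h : ℝ} {δ : ι → ℝ} {B : Matrix ι ι ℝ} {x : ι → ℝ}

theorem sisStep_apply (i : ι) :
    sisStep h δ B x i = (1 - h * δ i) * x i + h * ((1 - x i) * (B *ᵥ x) i) := by
  simp only [sisStep, sub_mulVec, ← mulVec_mulVec, Pi.add_apply, Pi.smul_apply, Pi.sub_apply,
    mulVec_diagonal, one_mulVec, smul_eq_mul]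
  ring

theorem linearization_mulVec_apply (i : ι) :
    ((1 - h • diagonal δ + h • B) *ᵥ x) i = (1 - h * δ i) * x i + h * (B *ᵥ x) i := by
  simp only [add_mulVec, sub_mulVec, smul_mulVec, Pi.add_apply, Pi.smul_apply, Pi.sub_apply,
    mulVec_diagonal, one_mulVec, smul_eq_mul]
  ring

theorem sisStep_nonneg (hh : 0 ≤ h) (hB : ∀ i j, 0 ≤ B i j) (hδ : ∀ i, h * δ i ≤ 1)
    (hx : ∀ i, x i ∈ Set.Icc (0 : ℝ) 1) (i : ι) : 0 ≤ sisStep h δ B x i := by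
  have hBx := mulVec_apply_nonneg hB (fun j => (hx j).1) i
  rw [sisStep_apply]
  exact add_nonneg (mul_nonneg (by linarith [hδ i]) (hx i).1)
    (mul_nonneg hh (mul_nonneg (by linarith [(hx i).2]) hBx))

theorem sisStep_le_linearization_mulVec (hh : 0 ≤ h) (hB : ∀ i j, 0 ≤ B i j)
    (hx : ∀ i, 0 ≤ x i) (i : ι) : sisStep h δ B x i ≤ ((1 - h • diagonal δ + h • B) *ᵥ x) i := by
  have hBx := mulVec_apply_nonneg hB hx i
  rw [sisStep_apply, linearization_mulVec_apply]
  nlinarith [mul_nonneg hh (mul_nonneg (hx i) hBx)]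

end SISStep

theorem sis_one_step_contraction_general
    (n : ℕ) (h : ℝ) (hh : 0 < h)
    (δ : Fin n → ℝ) (Bbar : Matrix (Fin n) (Fin n) ℝ)
    (hBsym : Bbar.IsSymm)
    -- Assumption 1
    (hA1B : ∀ i j, 0 ≤ Bbar i j)
    -- Assumption 2
    (hA2δ : ∀ i, h * δ i ≤ 1)
    -- current state in [0,1]ⁿ and next state
    (x : Fin n → ℝ) (hx : ∀ i, x i ∈ Set.Icc (0 : ℝ) 1)
    (x' : Fin n → ℝ)
    (hx' : x' = x + h • (((1 - Matrix.diagonal x) * Bbar - Matrix.diagonal δ) *ᵥ x)) :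
    euclNorm x' ≤ specRad (1 - h • Matrix.diagonal δ + h • Bbar) * euclNorm x := by
  have hM : (1 - h • diagonal δ + h • Bbar).IsSymm :=
    (isSymm_one.sub ((isSymm_diagonal δ).smul h)).add (hBsym.smul h)
  change x' = sisStep h δ Bbar x at hx'
  subst hx'
  calc euclNorm (sisStep h δ Bbar x)
      ≤ euclNorm ((1 - h • diagonal δ + h • Bbar) *ᵥ x) :=
        euclNorm_le_euclNorm (sisStep_nonneg hh.le hA1B hA2δ hx)
          (sisStep_le_linearization_mulVec hh.le hA1B fun i => (hx i).1)
    _ ≤ _ := hM.euclNorm_mulVec_le x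

/-- One-step contraction from the proof of Theorem 1: under Assumptions 1 and 2, for
symmetric `B̄(k)` and `x(k) ∈ [0,1]ⁿ`, the SIS update satisfies
`‖x(k+1)‖ ≤ ρ(M(k))‖x(k)‖` where `M(k) = I − hD(k) + hB̄(k)`. -/
theorem sis_one_step_contraction
    (n : ℕ) (h : ℝ) (hh : 0 < h)
    (δ : Fin n → ℝ) (Bbar : Matrix (Fin n) (Fin n) ℝ)
    (hBsym : Bbar.IsSymm)
    -- Assumption 1
    (hA1δ : ∀ i, 0 ≤ h * δ i)
    (hA1B : ∀ i j, 0 ≤ Bbar i j)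
    -- Assumption 2
    (hA2δ : ∀ i, h * δ i ≤ 1)
    (hA2B : ∀ i, h * ∑ j, Bbar i j ≤ 1)
    -- current state in [0,1]ⁿ and next state
    (x : Fin n → ℝ) (hx : ∀ i, x i ∈ Set.Icc (0 : ℝ) 1)
    (x' : Fin n → ℝ)
    (hx' : x' = x + h • (((1 - Matrix.diagonal x) * Bbar - Matrix.diagonal δ) *ᵥ x)) :
    euclNorm x' ≤ specRad (1 - h • Matrix.diagonal δ + h • Bbar) * euclNorm x :=
  sis_one_step_contraction_general n h hh δ Bbar hBsym hA1B hA2δ x hx x' hx'
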